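/- Let γ₁, γ₂ be closed strict paths of length k on {1,...,n} with Im γ₁ ∩ Im γ₂ ≠ ∅, and let γ₁ ⊔ γ₂ be the closed strict path of length 2k obtained by splicing γ₂ into γ₁ at the first common vertex. Then w_{γ₁}(S) · w_{γ₂}(S) = w_{γ₁⊔γ₂}(S) for every injective S, and |Im(γ₁ ⊔ γ₂)| ≤ |Im γ₁| + |Im γ₂| − 1. -/

import Mathlib

/-!
Extend the paths to functions on `ℕ` and compare edge products. The splice agrees with `γ₁` on
`[0, i₁]`, with `m ↦ γ̃₂ (i₂ + m - i₁)` on `[i₁, i₁ + k]`, where `γ̃₂` is the `k`-periodic extension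
of `γ₂` (this is where closedness of `γ₂` enters), and with `m ↦ γ₁ (m - k)` on `[i₁ + k, 2k]`.
Its edge product therefore splits into the edges of `γ₁` before `i₁`, one full period of the edges
of `γ̃₂` starting at `i₂` (by periodicity, all edges of `γ₂`), and the edges of `γ₁` after `i₁`.
For the count, the splice only visits vertices of `γ₁` and `γ₂`, which share the vertex `γ₁ i₁`.
-/

open scoped InnerProductSpace

/-- The weight of a path `γ` of length `k` on `{1,...,n}` under an assignment
`S : {1,...,n} → E` of vectors. -/
noncomputable def pathWeight {E : Type*} [NormedAddCommGroup E] [InnerProductSpace ℂ E]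
    {n k : ℕ} (γ : Fin (k + 1) → Fin n) (S : Fin n → E) : ℂ :=
  ∏ j : Fin k, ⟪S (γ j.castSucc), S (γ j.succ)⟫_ℂ

/-- The splice `γ₁ ⊔ γ₂` of two closed paths of length `k` at positions `i₁` (on `γ₁`) and
`i₂` (on `γ₂`): follow `γ₁` up to `i₁`, then traverse `γ₂` cyclically starting from `i₂`,
then finish `γ₁`. -/
def splice {n k : ℕ} (γ₁ γ₂ : Fin (k + 1) → Fin n) (i₁ i₂ : Fin (k + 1)) :
    Fin (2 * k + 1) → Fin n := fun j =>
  if h1 : (j : ℕ) < (i₁ : ℕ) then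
    γ₁ ⟨j, by have := j.isLt; have := i₁.isLt; omega⟩
  else if h2 : (j : ℕ) ≤ (i₁ : ℕ) + k then
    if h3 : (i₂ : ℕ) + ((j : ℕ) - (i₁ : ℕ)) ≤ k then
      γ₂ ⟨(i₂ : ℕ) + ((j : ℕ) - (i₁ : ℕ)), by omega⟩
    else
      γ₂ ⟨(i₂ : ℕ) + ((j : ℕ) - (i₁ : ℕ)) - k, by have := i₂.isLt; omega⟩
  else γ₁ ⟨(j : ℕ) - k, by have := j.isLt; omega⟩

open Finset Function Fin.NatCast

theorem Function.Periodic.prod_range_const_add {M : Type*} [CommMonoid M] {h : ℕ → M} {k : ℕ}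
    (hh : Periodic h k) (c : ℕ) : ∏ m ∈ range k, h (c + m) = ∏ m ∈ range k, h m := by
  induction c generalizing h with
  | zero => simp
  | succ c ih =>
    calc ∏ m ∈ range k, h (c + 1 + m) = ∏ m ∈ range k, h (m + 1) := by
          simpa only [add_right_comm c 1] using ih (hh.add_const 1)
      _ = ∏ m ∈ range k, h m := by
          cases k with
          | zero => simp
          | succ j => rw [prod_range_succ, prod_range_succ', ← zero_add (j + 1), hh 0, mul_comm]

theorem Set.ncard_union_le_add_sub_one {α : Type*} {s t : Set α} (hs : s.Finite) (ht : t.Finite)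
    (hst : (s ∩ t).Nonempty) : (s ∪ t).ncard ≤ s.ncard + t.ncard - 1 := by
  have := Set.ncard_union_add_ncard_inter s t hs ht
  have := (Set.ncard_pos (hs.inter_of_left t)).mpr hst
  omega

section Edges

variable {α M : Type*} [CommMonoid M] (f : α → α → M)

theorem prod_fin_edges_eq_prod_range {N : ℕ} (γ : Fin (N + 1) → α) :
    ∏ j : Fin N, f (γ j.castSucc) (γ j.succ) = ∏ m ∈ range N, f (γ m) (γ (m + 1 : ℕ)) := by
  rw [← Fin.prod_univ_eq_prod_range]
  refine prod_congr rfl fun j _ => ?_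
  rw [Fin.coe_eq_castSucc, ← Fin.val_succ, Fin.cast_val_eq_self]

theorem prod_range_edges_splice {g g₁ g₂ : ℕ → α} {k i₁ : ℕ} (i₂ : ℕ) (hi₁ : i₁ ≤ k)
    (hper : Periodic g₂ k) (hjoin : g₂ i₂ = g₁ i₁) (hpre : ∀ m < i₁, g m = g₁ m)
    (hmid : ∀ m ≤ k, g (i₁ + m) = g₂ (i₂ + m))
    (hpost : ∀ m, i₁ < m → m ≤ k → g (m + k) = g₁ m) :
    ∏ m ∈ range (2 * k), f (g m) (g (m + 1)) =
      (∏ m ∈ range k, f (g₁ m) (g₁ (m + 1))) * ∏ m ∈ range k, f (g₂ m) (g₂ (m + 1)) := by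
  replace hpre : ∀ m ≤ i₁, g m = g₁ m := fun m hm => hm.lt_or_eq.elim (hpre m) fun h => by
    simpa only [h, add_zero, hjoin] using hmid 0 k.zero_le
  replace hpost : ∀ m, i₁ ≤ m → m ≤ k → g (m + k) = g₁ m := fun m hm hmk =>
    hm.lt_or_eq.elim (fun h => hpost m h hmk) fun h => by
      simpa only [← h, hper i₂, hjoin] using hmid k le_rfl
  have hperEdge : Periodic (fun m => f (g₂ m) (g₂ (m + 1))) k := fun m => by
    simp only [hper m, add_right_comm m k 1, hper (m + 1)]
  have hfirst : ∏ m ∈ range i₁, f (g m) (g (m + 1)) = ∏ m ∈ range i₁, f (g₁ m) (g₁ (m + 1)) :=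
    prod_congr rfl fun m hm => by
      rw [mem_range] at hm
      rw [hpre m hm.le, hpre (m + 1) hm]
  have hloop : ∏ m ∈ range k, f (g (i₁ + m)) (g (i₁ + m + 1)) =
      ∏ m ∈ range k, f (g₂ m) (g₂ (m + 1)) := by
    rw [← hperEdge.prod_range_const_add i₂]
    refine prod_congr rfl fun m hm => ?_
    rw [mem_range] at hm
    rw [hmid m hm.le, add_assoc, hmid (m + 1) hm, add_assoc]
  have hlast : ∏ m ∈ range (k - i₁), f (g (i₁ + k + m)) (g (i₁ + k + m + 1)) =
      ∏ m ∈ range (k - i₁), f (g₁ (i₁ + m)) (g₁ (i₁ + m + 1)) := by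
    refine prod_congr rfl fun m hm => ?_
    rw [mem_range] at hm
    rw [add_right_comm i₁ k, hpost _ (by omega) (by omega), add_right_comm _ k 1,
      hpost _ (by omega) (by omega)]
  have hsplit : ∏ m ∈ range k, f (g₁ m) (g₁ (m + 1)) = (∏ m ∈ range i₁, f (g₁ m) (g₁ (m + 1))) *
      ∏ m ∈ range (k - i₁), f (g₁ (i₁ + m)) (g₁ (i₁ + m + 1)) := by
    rw [← prod_range_add, Nat.add_sub_cancel' hi₁]
  rw [show 2 * k = i₁ + k + (k - i₁) by omega, prod_range_add, prod_range_add, hfirst, hloop,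
    hlast, hsplit]
  ac_rfl

end Edges

section Splice

variable {α : Type*} {n k : ℕ}

def cyclicExt (γ : Fin (k + 1) → α) (m : ℕ) : α :=
  γ (m % k : ℕ)

theorem cyclicExt_periodic (γ : Fin (k + 1) → α) : Periodic (cyclicExt γ) k := fun m => by
  simp only [cyclicExt, Nat.add_mod_right]

theorem cyclicExt_of_le {γ : Fin (k + 1) → α} (hγ : γ 0 = γ (Fin.last k)) {m : ℕ} (hm : m ≤ k) :
    cyclicExt γ m = γ m := by
  rcases hm.lt_or_eq with hm | rfl
  · rw [cyclicExt, Nat.mod_eq_of_lt hm]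
  · rw [cyclicExt, Nat.mod_self, Nat.cast_zero, hγ, Fin.natCast_eq_last]

variable (γ₁ γ₂ : Fin (k + 1) → Fin n) {i₁ i₂ : Fin (k + 1)}

theorem splice_natCast_of_lt {m : ℕ} (hm : m < i₁) : splice γ₁ γ₂ i₁ i₂ m = γ₁ m := by
  simp only [splice, Fin.val_cast_of_lt (show m < 2 * k + 1 by omega), dif_pos hm]
  exact congrArg γ₁ (Fin.natCast_eq_mk _).symm

theorem splice_natCast_add (hγ₂ : γ₂ 0 = γ₂ (Fin.last k)) {m : ℕ} (hm : m ≤ k) :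
    splice γ₁ γ₂ i₁ i₂ ((i₁ : ℕ) + m : ℕ) = cyclicExt γ₂ ((i₂ : ℕ) + m) := by
  simp only [splice, Fin.val_cast_of_lt (show (i₁ : ℕ) + m < 2 * k + 1 by omega),
    dif_neg (show ¬ (i₁ : ℕ) + m < i₁ by omega), dif_pos (show (i₁ : ℕ) + m ≤ i₁ + k by omega),
    Nat.add_sub_cancel_left]
  split_ifs with hwrap
  · rw [cyclicExt_of_le hγ₂ hwrap]
    exact congrArg γ₂ (Fin.natCast_eq_mk _).symm
  · conv_rhs => rw [← Nat.sub_add_cancel (show k ≤ (i₂ : ℕ) + m by omega), cyclicExt_periodic,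
      cyclicExt_of_le hγ₂ (by omega)]
    exact congrArg γ₂ (Fin.natCast_eq_mk _).symm

theorem splice_natCast_add_length {m : ℕ} (hm : (i₁ : ℕ) < m) (hmk : m ≤ k) :
    splice γ₁ γ₂ i₁ i₂ (m + k : ℕ) = γ₁ m := by
  simp only [splice, Fin.val_cast_of_lt (show m + k < 2 * k + 1 by omega),
    dif_neg (show ¬ m + k < i₁ by omega), dif_neg (show ¬ m + k ≤ i₁ + k by omega),
    Nat.add_sub_cancel]
  exact congrArg γ₁ (Fin.natCast_eq_mk _).symm

theorem range_splice_subset :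
    Set.range (splice γ₁ γ₂ i₁ i₂) ⊆ Set.range γ₁ ∪ Set.range γ₂ := by
  rintro _ ⟨j, rfl⟩
  unfold splice
  split_ifs
  exacts [Or.inl ⟨_, rfl⟩, Or.inr ⟨_, rfl⟩, Or.inr ⟨_, rfl⟩, Or.inl ⟨_, rfl⟩]

theorem prod_edges_splice {M : Type*} [CommMonoid M] (f : Fin n → Fin n → M)
    (hγ₂ : γ₂ 0 = γ₂ (Fin.last k)) (hjoin : γ₂ i₂ = γ₁ i₁) :
    ∏ j : Fin (2 * k), f (splice γ₁ γ₂ i₁ i₂ j.castSucc) (splice γ₁ γ₂ i₁ i₂ j.succ) =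
      (∏ j : Fin k, f (γ₁ j.castSucc) (γ₁ j.succ)) *
        ∏ j : Fin k, f (γ₂ j.castSucc) (γ₂ j.succ) := by
  have hcyclic : ∏ m ∈ range k, f (γ₂ m) (γ₂ (m + 1 : ℕ)) =
      ∏ m ∈ range k, f (cyclicExt γ₂ m) (cyclicExt γ₂ (m + 1)) :=
    prod_congr rfl fun m hm => by
      rw [mem_range] at hm
      rw [cyclicExt_of_le hγ₂ hm.le, cyclicExt_of_le hγ₂ hm]
  simp only [prod_fin_edges_eq_prod_range, hcyclic]
  refine prod_range_edges_splice f (g := fun m => splice γ₁ γ₂ i₁ i₂ m) (g₁ := fun m => γ₁ m) i₂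
    i₁.is_le (cyclicExt_periodic γ₂) ?_ (fun m hm => splice_natCast_of_lt γ₁ γ₂ hm)
    (fun m hm => splice_natCast_add γ₁ γ₂ hγ₂ hm)
    (fun m hm hmk => splice_natCast_add_length γ₁ γ₂ hm hmk)
  simp only [cyclicExt_of_le hγ₂ i₂.is_le, Fin.cast_val_eq_self, hjoin]

end Splice

theorem stmt_17_general {E : Type*} [NormedAddCommGroup E] [InnerProductSpace ℂ E]
    (n k : ℕ) (γ₁ γ₂ : Fin (k + 1) → Fin n)
    (hclosed₂ : γ₂ 0 = γ₂ (Fin.last k))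
    (i₁ i₂ : Fin (k + 1))
    (hi₂ : γ₂ i₂ = γ₁ i₁ ∧ ∀ j : Fin (k + 1), (j : ℕ) < (i₂ : ℕ) → γ₂ j ≠ γ₁ i₁) :
    (∀ S : Fin n → E, Function.Injective S →
        pathWeight γ₁ S * pathWeight γ₂ S = pathWeight (splice γ₁ γ₂ i₁ i₂) S) ∧
      (Set.range (splice γ₁ γ₂ i₁ i₂)).ncard ≤
        (Set.range γ₁).ncard + (Set.range γ₂).ncard - 1 := by
  refine ⟨fun S _ => (prod_edges_splice γ₁ γ₂ (fun a b => ⟪S a, S b⟫_ℂ) hclosed₂ hi₂.1).symm, ?_⟩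
  have hcommon : (Set.range γ₁ ∩ Set.range γ₂).Nonempty := ⟨γ₁ i₁, ⟨i₁, rfl⟩, ⟨i₂, hi₂.1⟩⟩
  have hfin₁ := Set.finite_range γ₁
  have hfin₂ := Set.finite_range γ₂
  calc (Set.range (splice γ₁ γ₂ i₁ i₂)).ncard ≤ (Set.range γ₁ ∪ Set.range γ₂).ncard :=
        Set.ncard_le_ncard (range_splice_subset γ₁ γ₂) (hfin₁.union hfin₂)
    _ ≤ _ := Set.ncard_union_le_add_sub_one hfin₁ hfin₂ hcommon

/-- For closed strict paths `γ₁, γ₂` of length `k` on `{1,...,n}` with intersecting images,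
spliced at the first common vertex, the weights multiply, `w_{γ₁}(S)·w_{γ₂}(S) =
w_{γ₁⊔γ₂}(S)` for every injective assignment `S`, and the vertex set of the splice satisfies
`|Im(γ₁ ⊔ γ₂)| ≤ |Im γ₁| + |Im γ₂| − 1`. -/
theorem stmt_17 {E : Type*} [NormedAddCommGroup E] [InnerProductSpace ℂ E]
    (n k : ℕ) (γ₁ γ₂ : Fin (k + 1) → Fin n)
    (hclosed₁ : γ₁ 0 = γ₁ (Fin.last k))
    (hstrict₁ : ∀ j : Fin k, γ₁ j.castSucc ≠ γ₁ j.succ)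
    (hclosed₂ : γ₂ 0 = γ₂ (Fin.last k))
    (hstrict₂ : ∀ j : Fin k, γ₂ j.castSucc ≠ γ₂ j.succ)
    (i₁ i₂ : Fin (k + 1))
    (hi₁ : γ₁ i₁ ∈ Set.range γ₂ ∧ ∀ j : Fin (k + 1), (j : ℕ) < (i₁ : ℕ) →
      γ₁ j ∉ Set.range γ₂)
    (hi₂ : γ₂ i₂ = γ₁ i₁ ∧ ∀ j : Fin (k + 1), (j : ℕ) < (i₂ : ℕ) → γ₂ j ≠ γ₁ i₁) :
    (∀ S : Fin n → E, Function.Injective S →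
        pathWeight γ₁ S * pathWeight γ₂ S = pathWeight (splice γ₁ γ₂ i₁ i₂) S) ∧
      (Set.range (splice γ₁ γ₂ i₁ i₂)).ncard ≤
        (Set.range γ₁).ncard + (Set.range γ₂).ncard - 1 :=
  stmt_17_general n k γ₁ γ₂ hclosed₂ i₁ i₂ hi₂
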